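/- Fix n ∈ ℕ, 0 < ε ≤ 1 and K ≥ 2^n·ε, and let (P, ṽ) be the packing game of the instability construction with weights w̃ (identical to w except w̃({r}) = 1 − ε). Then the allocation ỹ : P → ℝ defined by ỹ(r) = 1 − ε, ỹ(p_i^{(l)}) = l·K + 2^{l−2}·ε, and ỹ(q_i^{(l)}) = l·K − 2^{l−2}·ε for all l ∈ {1,…,n+2}, i ∈ {1,…,4}, lies in the core of (P, ṽ): ỹ(P) = ṽ(P) and ỹ(S) ≥ ṽ(S) for all S ⊆ P. -/

import Mathlib

/-- The players of the instability construction: a root `r`, and players `p i (l)`,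
`q i (l)` for levels `l ∈ {1, …, n+2}` (encoded by `Fin (n+2)`, level `= l.1 + 1`) and
`i ∈ {1, …, 4}`. -/
inductive Player (n : ℕ) : Type where
  | r : Player n
  | p : Fin (n + 2) → Fin 4 → Player n
  | q : Fin (n + 2) → Fin 4 → Player n
  deriving DecidableEq, Fintype

/-- Index set for the family `𝒮` of the instability construction. -/
inductive Idx (n : ℕ) : Type where
  | root : Idx n
  | rootP : Fin 4 → Idx n
  | pair : Fin (n + 2) → Fin 4 → Idx n
  | quad : Fin (n + 1) → Fin 4 → Idx n
  deriving DecidableEq, Fintype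

/-- The coalitions of the family `𝒮`: `{r}`; `{r, p_i^{(1)}}`; `{p_i^{(l)}, q_i^{(l)}}`;
and `{q_1^{(l)}, q_2^{(l)}, q_3^{(l)}, q_4^{(l)}, p_i^{(l+1)}}`. -/
def coal {n : ℕ} : Idx n → Finset (Player n)
  | .root => {Player.r}
  | .rootP i => {Player.r, Player.p 0 i}
  | .pair l i => {Player.p l i, Player.q l i}
  | .quad l i => {Player.q l.castSucc 0, Player.q l.castSucc 1, Player.q l.castSucc 2,
      Player.q l.castSucc 3, Player.p l.succ i}

/-- The weights of the family `𝒮`: `rootW` on `{r}` (which is `1` for `w` and `1 − ε` for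
`w̃`); `1` on `{r, p_i^{(1)}}`; `2·l·K` on `{p_i^{(l)}, q_i^{(l)}}`; and `4·l·K` on
`{q_1^{(l)}, …, q_4^{(l)}, p_i^{(l+1)}}`. -/
noncomputable def wt {n : ℕ} (K rootW : ℝ) : Idx n → ℝ
  | .root => rootW
  | .rootP _ => 1
  | .pair l _ => 2 * ((l.1 : ℝ) + 1) * K
  | .quad l _ => 4 * ((l.1 : ℝ) + 1) * K

/-- The packing game of the instability construction: `packV n K rootW S` is the maximum
total weight of a packing of pairwise disjoint members of `𝒮` inside `S` (the empty
packing is allowed). -/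
noncomputable def packV (n : ℕ) (K rootW : ℝ) (S : Finset (Player n)) : ℝ :=
  ((Finset.univ : Finset (Idx n)).powerset.filter (fun F =>
      (∀ j ∈ F, coal j ⊆ S) ∧
      ∀ j ∈ F, ∀ j' ∈ F, j ≠ j' → Disjoint (coal j) (coal j'))).sup'
    ⟨∅, by simp⟩ (fun F => ∑ j ∈ F, wt K rootW j)

/-!
The allocation `ỹ` is nonnegative and satisfies `w̃(T) ≤ ỹ(T)` for every `T ∈ 𝒮`, so any
packing inside `S` has total weight at most `ỹ(S)`. For the five-player coalitions this is
where `K ≥ 2^n·ε` enters: the four `q_i^{(l)}` fall short of the weight `4·l·K` by `2^l·ε`,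
which `ỹ(p_i^{(l+1)}) = (l+1)·K + 2^{l-1}·ε` covers because `2^{l-1}·ε ≤ 2^n·ε ≤ K`.
Conversely `{r}` and the pairs `{p_i^{(l)}, q_i^{(l)}}` partition `P` and `ỹ` equals the weight
on each of them, so this packing attains `ỹ(P)`.
-/

theorem Finset.sum_le_sum_of_pairwiseDisjoint {ι α M : Type*} [DecidableEq α]
    [AddCommMonoid M] [PartialOrder M] [IsOrderedAddMonoid M]
    {c : ι → Finset α} {w : ι → M} {y : α → M} {F : Finset ι} {S : Finset α}
    (hF : (F : Set ι).PairwiseDisjoint c) (hFS : ∀ j ∈ F, c j ⊆ S)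
    (hw : ∀ j ∈ F, w j ≤ ∑ a ∈ c j, y a) (hy : ∀ a ∈ S, 0 ≤ y a) :
    ∑ j ∈ F, w j ≤ ∑ a ∈ S, y a :=
  calc ∑ j ∈ F, w j ≤ ∑ j ∈ F, ∑ a ∈ c j, y a := Finset.sum_le_sum hw
    _ = ∑ a ∈ F.biUnion c, y a := (Finset.sum_biUnion hF).symm
    _ ≤ ∑ a ∈ S, y a :=
      Finset.sum_le_sum_of_subset_of_nonneg (Finset.biUnion_subset.2 hFS) fun a ha _ => hy a ha

theorem two_zpow_mul_le {n : ℕ} {ε K : ℝ} (hε : 0 ≤ ε) (hK : 2 ^ n * ε ≤ K) {m : ℤ}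
    (hm : m ≤ n) : (2 : ℝ) ^ m * ε ≤ K :=
  calc (2 : ℝ) ^ m * ε ≤ 2 ^ (n : ℤ) * ε := by gcongr; norm_num
    _ = 2 ^ n * ε := by rw [zpow_natCast]
    _ ≤ K := hK

section PackingGame

variable {n : ℕ} {K rootW : ℝ}

theorem packV_le_sum {y : Player n → ℝ} (hy : ∀ a, 0 ≤ y a)
    (hw : ∀ j, wt K rootW j ≤ ∑ a ∈ coal j, y a) (S : Finset (Player n)) :
    packV n K rootW S ≤ ∑ a ∈ S, y a := by
  refine Finset.sup'_le _ _ fun F hF => ?_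
  obtain ⟨-, hFS, hdisj⟩ := Finset.mem_filter.1 hF
  exact Finset.sum_le_sum_of_pairwiseDisjoint (fun j hj j' hj' => hdisj j hj j' hj') hFS
    (fun j _ => hw j) (fun a _ => hy a)

theorem sum_wt_le_packV {F : Finset (Idx n)} {S : Finset (Player n)}
    (hF : (F : Set (Idx n)).PairwiseDisjoint coal) (hFS : ∀ j ∈ F, coal j ⊆ S) :
    ∑ j ∈ F, wt K rootW j ≤ packV n K rootW S :=
  Finset.le_sup' (fun F => ∑ j ∈ F, wt K rootW j)
    (Finset.mem_filter.2 ⟨Finset.mem_powerset.2 F.subset_univ, hFS, fun _ hj _ hj' => hF hj hj'⟩)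

theorem sum_coal_quad {M : Type*} [AddCommMonoid M] (y : Player n → M)
    (l : Fin (n + 1)) (i : Fin 4) :
    ∑ a ∈ coal (.quad l i), y a = ∑ k, y (.q l.castSucc k) + y (.p l.succ i) := by
  simp [coal, Fin.sum_univ_four, add_assoc]

def block : Player n → Idx n
  | .r => .root
  | .p l i => .pair l i
  | .q l i => .pair l i

theorem coal_block (a : Player n) :
    coal (block a) = ({b | block b = block a} : Finset (Player n)) := by
  ext b
  rw [Finset.mem_filter_univ]
  cases a <;> cases b <;> simp [coal, block]

theorem pairwiseDisjoint_coal_image_block :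
    ((Finset.univ.image block : Finset (Idx n)) : Set (Idx n)).PairwiseDisjoint coal := by
  rw [Finset.coe_image]
  rintro _ ⟨a, -, rfl⟩ _ ⟨b, -, rfl⟩ hne
  show Disjoint (coal _) (coal _)
  rw [coal_block, coal_block]
  exact Finset.disjoint_filter.2 fun _ _ ha hb => hne (ha.symm.trans hb)

end PackingGame

noncomputable def yTilde (n : ℕ) (K ε : ℝ) : Player n → ℝ
  | .r => 1 - ε
  | .p l _ => ((l.1 : ℝ) + 1) * K + 2 ^ ((l.1 : ℤ) - 1) * ε
  | .q l _ => ((l.1 : ℝ) + 1) * K - 2 ^ ((l.1 : ℤ) - 1) * ε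

section Allocation

variable {n : ℕ} {ε K : ℝ}

theorem yTilde_nonneg (hε0 : 0 ≤ ε) (hε1 : ε ≤ 1) (hK : 2 ^ n * ε ≤ K) (a : Player n) :
    0 ≤ yTilde n K ε a := by
  have hK0 : 0 ≤ K := (by positivity : (0 : ℝ) ≤ 2 ^ n * ε).trans hK
  cases a with
  | r => simpa [yTilde]
  | p l i => simp only [yTilde]; positivity
  | q l i =>
    have hq : (2 : ℝ) ^ ((l.1 : ℤ) - 1) * ε ≤ K := two_zpow_mul_le hε0 hK (by omega)
    have : 0 ≤ (l.1 : ℝ) * K := by positivity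
    simp only [yTilde]
    linarith

theorem sum_coal_block_yTilde (a : Player n) :
    ∑ b ∈ coal (block a), yTilde n K ε b = wt K (1 - ε) (block a) := by
  cases a <;> simp [block, coal, wt, yTilde] <;> ring

theorem wt_le_sum_yTilde (hε0 : 0 ≤ ε) (hK : 2 ^ n * ε ≤ K) (j : Idx n) :
    wt K (1 - ε) j ≤ ∑ a ∈ coal j, yTilde n K ε a := by
  have hK0 : 0 ≤ K := (by positivity : (0 : ℝ) ≤ 2 ^ n * ε).trans hK
  cases j with
  | root => exact (sum_coal_block_yTilde .r).ge
  | rootP i =>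
    have : ε ≤ K := (le_mul_of_one_le_left hε0 (one_le_pow₀ one_le_two)).trans hK
    rw [coal, Finset.sum_pair (by simp)]
    simp only [wt, yTilde, Fin.val_zero]
    norm_num
    linarith
  | pair l i => exact (sum_coal_block_yTilde (.p l i)).ge
  | quad l i =>
    have hp : (2 : ℝ) ^ (l.1 : ℤ) * ε ≤ K := two_zpow_mul_le hε0 hK (by simp [l.is_le])
    have hdouble : (2 : ℝ) ^ (l.1 : ℤ) * ε = 2 * (2 ^ ((l.1 : ℤ) - 1) * ε) := by
      rw [← mul_assoc, mul_comm 2, ← zpow_add_one₀ two_ne_zero, sub_add_cancel]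
    have : 0 ≤ (l.1 : ℝ) * K := by positivity
    rw [sum_coal_quad, Fin.sum_univ_four]
    simp only [wt, yTilde, Fin.val_succ, Fin.val_castSucc]
    push_cast
    rw [add_sub_cancel_right]
    linarith

theorem sum_wt_image_block :
    ∑ j ∈ (Finset.univ : Finset (Player n)).image block, wt K (1 - ε) j =
      ∑ a, yTilde n K ε a :=
  Finset.sum_image' _ fun a _ => by rw [← coal_block, sum_coal_block_yTilde]

end Allocation

/-- The allocation `ỹ` with `ỹ(r) = 1 − ε`,
`ỹ(p_i^{(l)}) = l·K + 2^{l−2}·ε` and `ỹ(q_i^{(l)}) = l·K − 2^{l−2}·ε` lies in the core of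
the perturbed packing game `(P, ṽ)` (root weight `1 − ε`, with `0 < ε ≤ 1` and
`K ≥ 2^n·ε`). -/
theorem stmt14 (n : ℕ) (ε K : ℝ) (hε0 : 0 < ε) (hε1 : ε ≤ 1) (hK : 2 ^ n * ε ≤ K)
    (yt : Player n → ℝ)
    (hyr : yt Player.r = 1 - ε)
    (hyp : ∀ (l : Fin (n + 2)) (i : Fin 4),
      yt (Player.p l i) = ((l.1 : ℝ) + 1) * K + 2 ^ ((l.1 : ℤ) - 1) * ε)
    (hyq : ∀ (l : Fin (n + 2)) (i : Fin 4),
      yt (Player.q l i) = ((l.1 : ℝ) + 1) * K - 2 ^ ((l.1 : ℤ) - 1) * ε) :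
    (∑ p, yt p) = packV n K (1 - ε) Finset.univ ∧
    ∀ S : Finset (Player n), packV n K (1 - ε) S ≤ ∑ p ∈ S, yt p := by
  obtain rfl : yt = yTilde n K ε := funext fun a => by cases a <;> simp [yTilde, *]
  have hcore := packV_le_sum (yTilde_nonneg hε0.le hε1 hK) (wt_le_sum_yTilde hε0.le hK)
  refine ⟨le_antisymm ?_ (hcore _), hcore⟩
  rw [← sum_wt_image_block]
  exact sum_wt_le_packV pairwiseDisjoint_coal_image_block fun _ _ => Finset.subset_univ _
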